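/- arXiv:1506.07359 — 2 statements merged into one kernel-verified Lean document; each statement's English description precedes it below -/
import Mathlib

section
/- Policy-causal equals action-causal intervention: for every deterministic policy π, every time step t ≤ m, every history æ_{<t} with μ(æ_{<t}) > 0, and every percept e_t ∈ 𝓔, one has μ(e_t | æ_{<t}, do(π_{t:m})) = μ(e_t | æ_{<t}, do(a_t := π(æ_{<t}))); that is, ∑_{e_{t+1:m}} μ(e_{t:m} | æ_{<t}, do(a_t := π(æ_{<t}), …, a_m := π(æ_{<m}))) = ∑_{s ∈ 𝓢} μ(s | æ_{<t}) μ(e_t | s, æ_{<t} π(æ_{<t})). -/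
/-! # A framework for physicalistic sequential decision making

Following Everitt, Leike, Hutter, "Sequential Extensions of Causal and
Evidential Decision Theory".

An environment model `μ` over hidden states `S`, actions `A`, percepts `E`
with lifetime `m` is given in causally factored form
`μ(s, æ_{1:m}) = μ(s) ∏_i μ(a_i | s, æ_{<i}) μ(e_i | s, æ_{<i} a_i)`.
Histories are lists of action-percept pairs. -/

noncomputable section

variable {S A E : Type*}

/-- The product `∏ μ(a_i | s, æ_{<i}) μ(e_i | s, æ_{<i}a_i)` of the factors along the
continuation `rest` of the history-prefix `pre`. -/
def wSuf (pa : S → List (A × E) → A → ℝ) (pe : S → List (A × E) → A → E → ℝ)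
    (s : S) : List (A × E) → List (A × E) → ℝ
  | _, [] => 1
  | pre, (a, e) :: rest => pa s pre a * pe s pre a e * wSuf pa pe s (pre ++ [(a, e)]) rest

/-- A physicalistic environment model with lifetime `m`: a prior pmf on the hidden state,
together with conditional pmfs for the action and the percept at every time step
(i.e. after every history of length `< m`), which is action-positive. -/
structure Env (S A E : Type*) [Fintype S] [Fintype A] [Fintype E] (m : ℕ) where
  /-- the prior `μ(s)` over the hidden state -/
  prior : S → ℝ
  /-- the action factor `μ(a_t | s, æ_{<t})` -/
  pa : S → List (A × E) → A → ℝ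
  /-- the percept factor `μ(e_t | s, æ_{<t}a_t)` -/
  pe : S → List (A × E) → A → E → ℝ
  prior_nonneg : ∀ s, 0 ≤ prior s
  prior_sum : ∑ s, prior s = 1
  pa_nonneg : ∀ s h a, 0 ≤ pa s h a
  pa_sum : ∀ s (h : List (A × E)), h.length < m → ∑ a, pa s h a = 1
  pe_nonneg : ∀ s h a e, 0 ≤ pe s h a e
  pe_sum : ∀ s (h : List (A × E)) (a : A), h.length < m → ∑ e, pe s h a e = 1
  /-- action-positivity: `μ(æ_{<t} | s) > 0` implies `μ(a_t | s, æ_{<t}) > 0` -/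
  action_pos : ∀ s (h : List (A × E)) (a : A), h.length < m →
    0 < wSuf pa pe s [] h → 0 < pa s h a

variable [Fintype S] [Fintype A] [Fintype E] {m : ℕ}

/-- Event: the trajectory `τ = æ_{1:m}` extends the history `h = æ_{<t}`. -/
def ExtendsH (h : List (A × E)) (τ : Fin m → A × E) : Prop :=
  (List.ofFn τ).take h.length = h

/-- Event: the actions of the trajectory `τ` from (0-based) time `t0` on follow
the deterministic policy `π`. -/
def FollowsFrom (π : List (A × E) → A) (t0 : ℕ) (τ : Fin m → A × E) : Prop :=
  ∀ i : Fin m, t0 ≤ (i : ℕ) → (τ i).1 = π ((List.ofFn τ).take (i : ℕ))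

/-- Event: the action at (0-based) time `k` is `a`. -/
def ActAt (k : ℕ) (a : A) (τ : Fin m → A × E) : Prop :=
  ∀ hk : k < m, (τ ⟨k, hk⟩).1 = a

/-- Event: the percept at (0-based) time `k` is `e`. -/
def PerAt (k : ℕ) (e : E) (τ : Fin m → A × E) : Prop :=
  ∀ hk : k < m, (τ ⟨k, hk⟩).2 = e

namespace Env

/-- The joint probability `μ(s, æ_{<t})`, given directly by the causal factorization. -/
def hw (μ : Env S A E m) (s : S) (h : List (A × E)) : ℝ :=
  μ.prior s * wSuf μ.pa μ.pe s [] h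

/-- The marginal probability `μ(æ_{<t})` of a history. -/
def probH (μ : Env S A E m) (h : List (A × E)) : ℝ := ∑ s, μ.hw s h

/-- The probability `μ(æ_{<t}a_t)` of a history followed by an action. -/
def probHA (μ : Env S A E m) (h : List (A × E)) (a : A) : ℝ :=
  ∑ s, μ.hw s h * μ.pa s h a

/-- The action-evidential conditional `μ(e_t | æ_{<t}a_t)`. -/
def condE (μ : Env S A E m) (h : List (A × E)) (a : A) (e : E) : ℝ :=
  μ.probH (h ++ [(a, e)]) / μ.probHA h a

/-- The posterior `μ(s | æ_{<t})` over the hidden state. -/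
def condS (μ : Env S A E m) (s : S) (h : List (A × E)) : ℝ :=
  μ.hw s h / μ.probH h

/-- The posterior `μ(s | æ_{<t}a_t)` over the hidden state, also conditioning on `a_t`. -/
def condSA (μ : Env S A E m) (s : S) (h : List (A × E)) (a : A) : ℝ :=
  μ.hw s h * μ.pa s h a / μ.probHA h a

/-- The conditional `μ(e_t | s, æ_{<t}a_t)` given the hidden state. -/
def condESA (μ : Env S A E m) (s : S) (h : List (A × E)) (a : A) (e : E) : ℝ :=
  μ.hw s (h ++ [(a, e)]) / (μ.hw s h * μ.pa s h a)

/-! ## Causal interventions -/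

/-- The intervened joint `μ(s, æ_{<t}, e_t | do(a_t := b))`: the action factor at time `t`
is deleted and `a_t` is substituted by `b`. -/
def doJoint (μ : Env S A E m) (s : S) (h : List (A × E)) (b : A) (e : E) : ℝ :=
  μ.hw s h * μ.pe s h b e

/-- `μ(æ_{<t}, e_t | do(a_t := b))`, marginalizing the hidden state. -/
def doNum (μ : Env S A E m) (h : List (A × E)) (b : A) (e : E) : ℝ :=
  ∑ s, μ.doJoint s h b e

/-- `μ(æ_{<t} | do(a_t := b))`, marginalizing the hidden state and the percept `e_t`. -/
def doDen (μ : Env S A E m) (h : List (A × E)) (b : A) : ℝ :=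
  ∑ e, μ.doNum h b e

/-- The causal conditional `μ(e_t | æ_{<t}, do(a_t := b))`. -/
def condDo (μ : Env S A E m) (h : List (A × E)) (b : A) (e : E) : ℝ :=
  μ.doNum h b e / μ.doDen h b

/-- Product of the percept factors along the percepts `es`, all action factors being
deleted and the actions substituted according to the policy `π`:
the intervened conditional `μ(e_{t:k} | s, æ_{<t}, do(a_t := π(æ_{<t}), …))`. -/
def doPE (μ : Env S A E m) (π : List (A × E) → A) (s : S) :
    List (A × E) → List E → ℝ
  | _, [] => 1
  | h, e :: es => μ.pe s h (π h) e * μ.doPE π s (h ++ [(π h, e)]) es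

/-- `μ(æ_{<t}, e_{t:k} | do(a_t := π(æ_{<t}), …, a_m := π(æ_{<m})))` where the percepts
`e_{t:k}` are given by the list `es`. -/
def doPolNum (μ : Env S A E m) (π : List (A × E) → A) (h : List (A × E))
    (es : List E) : ℝ :=
  ∑ s, μ.hw s h * μ.doPE π s h es

/-- `μ(æ_{<t} | do(a_t := π(æ_{<t}), …, a_m := π(æ_{<m})))`, marginalizing all the
intervened percepts `e_{t:m}`. -/
def doPolDen (μ : Env S A E m) (π : List (A × E) → A) (h : List (A × E)) : ℝ :=
  ∑ es : Fin (m - h.length) → E, μ.doPolNum π h (List.ofFn es)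

/-! ## Probabilities of trajectory events -/

open Classical in
/-- The probability of an event `Q` over full trajectories `æ_{1:m}`. -/
def evP (μ : Env S A E m) (Q : (Fin m → A × E) → Prop) : ℝ :=
  ∑ τ : Fin m → A × E, if Q τ then μ.probH (List.ofFn τ) else 0

open Classical in
/-- The joint probability of the hidden state `s` and an event `Q` over full
trajectories `æ_{1:m}`. -/
def evPS (μ : Env S A E m) (s : S) (Q : (Fin m → A × E) → Prop) : ℝ :=
  ∑ τ : Fin m → A × E, if Q τ then μ.hw s (List.ofFn τ) else 0

/-- The policy-evidential conditional `μ(e_t | æ_{<t}, π_{t:m})`, conditioning on the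
event that the history extends `æ_{<t}` and the actions from time `t` to `m` follow `π`. -/
def condPev (μ : Env S A E m) (π : List (A × E) → A) (h : List (A × E)) (e : E) : ℝ :=
  μ.evP (fun τ => ExtendsH h τ ∧ FollowsFrom π h.length τ ∧ PerAt h.length e τ) /
    μ.evP (fun τ => ExtendsH h τ ∧ FollowsFrom π h.length τ)

/-- The posterior `μ(s | æ_{<t}, π_{t:m})` over the hidden state given the policy event. -/
def condSPev (μ : Env S A E m) (π : List (A × E) → A) (s : S) (h : List (A × E)) : ℝ :=
  μ.evPS s (fun τ => ExtendsH h τ ∧ FollowsFrom π h.length τ) /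
    μ.evP (fun τ => ExtendsH h τ ∧ FollowsFrom π h.length τ)

/-- The conditional `μ(e_t | s, æ_{<t}, π_{t:m})` given the hidden state and the
policy event. -/
def condESPev (μ : Env S A E m) (π : List (A × E) → A) (s : S) (h : List (A × E))
    (e : E) : ℝ :=
  μ.evPS s (fun τ => ExtendsH h τ ∧ FollowsFrom π h.length τ ∧ PerAt h.length e τ) /
    μ.evPS s (fun τ => ExtendsH h τ ∧ FollowsFrom π h.length τ)

/-- The conditional `μ(e_t | æ_{<t}a_t, π_{t+1:m})` used in the recursive definition of
the policy-evidential value. -/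
def condPevA (μ : Env S A E m) (π : List (A × E) → A) (h : List (A × E)) (a : A)
    (e : E) : ℝ :=
  μ.evP (fun τ => ExtendsH (h ++ [(a, e)]) τ ∧ FollowsFrom π (h.length + 1) τ) /
    μ.evP (fun τ => ExtendsH h τ ∧ ActAt h.length a τ ∧ FollowsFrom π (h.length + 1) τ)

/-! ## Value functions

The recursions are driven by the fuel `n`, the number of remaining time steps: the
value of a history `æ_{<t}` (for `t ≤ m + 1`) or of `æ_{<t}a_t` (for `t ≤ m`) within
lifetime `m` uses fuel `n = m - (t - 1)`, and the value is `0` for `t > m`. -/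

/-- The action-evidential value `V^{aev,π}_{μ}(æ_{<t}a_t)` (with `n = m - t + 1`):
`V^{aev,π}(æ_{<t}a_t) = ∑_{e_t} μ(e_t | æ_{<t}a_t) (u(e_t) + V^{aev,π}(æ_{<t}a_te_t))`. -/
def VaevA (μ : Env S A E m) (u : E → ℝ) (π : List (A × E) → A) :
    ℕ → List (A × E) → A → ℝ
  | 0, _, _ => 0
  | n + 1, h, a =>
    ∑ e, μ.condE h a e * (u e + μ.VaevA u π n (h ++ [(a, e)]) (π (h ++ [(a, e)])))

/-- The action-evidential value of a history, `V^{aev,π}(æ_{<t}) = V^{aev,π}(æ_{<t}π(æ_{<t}))`. -/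
def Vaev (μ : Env S A E m) (u : E → ℝ) (π : List (A × E) → A) (n : ℕ)
    (h : List (A × E)) : ℝ :=
  μ.VaevA u π n h (π h)

/-- The policy-evidential value `V^{pev,π}_{μ}(æ_{<t}a_t)` (with `n = m - t + 1`):
`V^{pev,π}(æ_{<t}a_t) = ∑_{e_t} μ(e_t | æ_{<t}a_t, π_{t+1:m}) (u(e_t) + V^{pev,π}(æ_{<t}a_te_t))`. -/
def VpevA (μ : Env S A E m) (u : E → ℝ) (π : List (A × E) → A) :
    ℕ → List (A × E) → A → ℝ
  | 0, _, _ => 0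
  | n + 1, h, a =>
    ∑ e, μ.condPevA π h a e * (u e + μ.VpevA u π n (h ++ [(a, e)]) (π (h ++ [(a, e)])))

/-- The policy-evidential value of a history. -/
def Vpev (μ : Env S A E m) (u : E → ℝ) (π : List (A × E) → A) (n : ℕ)
    (h : List (A × E)) : ℝ :=
  μ.VpevA u π n h (π h)

/-- The causal value `V^{cau,π}_{μ}(æ_{<t}a_t)` (with `n = m - t + 1`):
`V^{cau,π}(æ_{<t}a_t) = ∑_{e_t} μ(e_t | æ_{<t}, do(a_t)) (u(e_t) + V^{cau,π}(æ_{<t}a_te_t))`. -/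
def VcauA (μ : Env S A E m) (u : E → ℝ) (π : List (A × E) → A) :
    ℕ → List (A × E) → A → ℝ
  | 0, _, _ => 0
  | n + 1, h, a =>
    ∑ e, μ.condDo h a e * (u e + μ.VcauA u π n (h ++ [(a, e)]) (π (h ++ [(a, e)])))

/-- The causal value of a history. -/
def Vcau (μ : Env S A E m) (u : E → ℝ) (π : List (A × E) → A) (n : ℕ)
    (h : List (A × E)) : ℝ :=
  μ.VcauA u π n h (π h)

/-! ## Products of one-step conditionals, for the iterative forms -/

/-- `∏_{i=t}^{k} μ(e_i | æ_{<i}a_i)` with `a_i := π(æ_{<i})`, the percepts `e_{t:k}`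
being given by the list `es`. -/
def prodAev (μ : Env S A E m) (π : List (A × E) → A) : List (A × E) → List E → ℝ
  | _, [] => 1
  | h, e :: es => μ.condE h (π h) e * μ.prodAev π (h ++ [(π h, e)]) es

/-- `∏_{i=t}^{k} μ(e_i | æ_{<i}, π_{i:m})`. -/
def prodPev (μ : Env S A E m) (π : List (A × E) → A) : List (A × E) → List E → ℝ
  | _, [] => 1
  | h, e :: es => μ.condPev π h e * μ.prodPev π (h ++ [(π h, e)]) es

/-- `∏_{i=t}^{k} μ(e_i | æ_{<i}, do(a_i))` with `a_i := π(æ_{<i})`. -/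
def prodCau (μ : Env S A E m) (π : List (A × E) → A) : List (A × E) → List E → ℝ
  | _, [] => 1
  | h, e :: es => μ.condDo h (π h) e * μ.prodCau π (h ++ [(π h, e)]) es

/-- `∏_{i=t}^{k} ∑_{s} μ(s | æ_{<i}) μ(e_i | s, æ_{<i}a_i)` with `a_i := π(æ_{<i})`. -/
def prodCauX (μ : Env S A E m) (π : List (A × E) → A) : List (A × E) → List E → ℝ
  | _, [] => 1
  | h, e :: es =>
    (∑ s, μ.condS s h * μ.condESA s h (π h) e) * μ.prodCauX π (h ++ [(π h, e)]) es

end Env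

end

/-! The policy intervention `do(π_{t:m})` replaces every action factor from time `t` on by
the percept factor at the action chosen by `π`. Summed over the percepts `e_{t+1:m}`, these
later percept factors telescope to `1`, since each is a pmf; what remains is the single
intervention `do(a_t := π(æ_{<t}))`. Its normaliser is `μ(æ_{<t})` for the same reason, and
expanding `μ(s, æ_{<t}a_te_t) = μ(s, æ_{<t}) μ(a_t | s, æ_{<t}) μ(e_t | s, æ_{<t}a_t)`, with
the action factor positive by action-positivity, gives the hidden-state form. -/

section wSuf

variable {S A E : Type*} {pa : S → List (A × E) → A → ℝ} {pe : S → List (A × E) → A → E → ℝ}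

lemma wSuf_nonneg (hpa : ∀ s h a, 0 ≤ pa s h a) (hpe : ∀ s h a e, 0 ≤ pe s h a e) (s : S) :
    ∀ rest pre : List (A × E), 0 ≤ wSuf pa pe s pre rest
  | [], _ => zero_le_one
  | (a, e) :: rest, pre =>
    mul_nonneg (mul_nonneg (hpa s pre a) (hpe s pre a e))
      (wSuf_nonneg hpa hpe s rest (pre ++ [(a, e)]))

lemma wSuf_append_singleton (s : S) :
    ∀ (rest pre : List (A × E)) (a : A) (e : E),
      wSuf pa pe s pre (rest ++ [(a, e)]) =
        wSuf pa pe s pre rest * (pa s (pre ++ rest) a * pe s (pre ++ rest) a e)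
  | [], pre, a, e => by simp [wSuf]
  | (a', e') :: rest, pre, a, e => by
    simp only [List.cons_append, wSuf]
    rw [wSuf_append_singleton s rest (pre ++ [(a', e')]) a e, List.append_assoc,
      List.singleton_append]
    ring

end wSuf

namespace Env

variable {S A E : Type*} [Fintype S] [Fintype A] [Fintype E] {m : ℕ} (μ : Env S A E m)

lemma hw_append_singleton (s : S) (h : List (A × E)) (a : A) (e : E) :
    μ.hw s (h ++ [(a, e)]) = μ.hw s h * μ.pa s h a * μ.pe s h a e := by
  rw [hw, hw, wSuf_append_singleton, List.nil_append]
  ring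

lemma pa_pos_of_hw_ne_zero {s : S} {h : List (A × E)} (hlen : h.length < m)
    (hs : μ.hw s h ≠ 0) (a : A) : 0 < μ.pa s h a := by
  have hsuf : wSuf μ.pa μ.pe s [] h ≠ 0 := fun h0 => hs (by rw [hw, h0, mul_zero])
  exact μ.action_pos s h a hlen
    ((wSuf_nonneg μ.pa_nonneg μ.pe_nonneg s h []).lt_of_ne' hsuf)

lemma condS_mul_condESA {h : List (A × E)} (hlen : h.length < m) (s : S) (b : A) (e : E) :
    μ.condS s h * μ.condESA s h b e = μ.doJoint s h b e / μ.probH h := by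
  rw [condS, condESA, doJoint, hw_append_singleton]
  by_cases hs : μ.hw s h = 0
  · simp [hs]
  · have hpa := μ.pa_pos_of_hw_ne_zero hlen hs b
    field_simp

lemma doDen_eq_probH {h : List (A × E)} (hlen : h.length < m) (b : A) :
    μ.doDen h b = μ.probH h := by
  simp only [doDen, doNum, doJoint, probH]
  rw [Finset.sum_comm]
  refine Finset.sum_congr rfl fun s _ => ?_
  rw [← Finset.mul_sum, μ.pe_sum s h b hlen, mul_one]

lemma condDo_eq_doNum_div_probH {h : List (A × E)} (hlen : h.length < m) (b : A) (e : E) :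
    μ.condDo h b e = μ.doNum h b e / μ.probH h := by
  rw [condDo, μ.doDen_eq_probH hlen]

lemma sum_doPE_eq_one (π : List (A × E) → A) (s : S) :
    ∀ (k : ℕ) (h : List (A × E)), h.length + k ≤ m →
      ∑ es : Fin k → E, μ.doPE π s h (List.ofFn es) = 1
  | 0, h, _ => by simp [doPE]
  | k + 1, h, hk => by
    rw [← (Fin.consEquiv fun _ : Fin (k + 1) => E).sum_comp, Fintype.sum_prod_type,
      ← μ.pe_sum s h (π h) (by omega)]
    refine Finset.sum_congr rfl fun e _ => ?_
    simp only [Fin.consEquiv, Equiv.coe_fn_mk, List.ofFn_succ, Fin.cons_zero, Fin.cons_succ,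
      doPE, ← Finset.mul_sum, sum_doPE_eq_one π s k (h ++ [(π h, e)]) (by simp; omega), mul_one]

lemma doPolDen_eq_probH (π : List (A × E) → A) {h : List (A × E)} (hlen : h.length ≤ m) :
    μ.doPolDen π h = μ.probH h := by
  simp only [doPolDen, doPolNum, probH]
  rw [Finset.sum_comm]
  refine Finset.sum_congr rfl fun s _ => ?_
  rw [← Finset.mul_sum, μ.sum_doPE_eq_one π s _ h (by omega), mul_one]

lemma sum_doPolNum_cons_eq_doNum (π : List (A × E) → A) {h : List (A × E)}
    (hlen : h.length < m) (e : E) :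
    ∑ es : Fin (m - h.length - 1) → E, μ.doPolNum π h (e :: List.ofFn es)
      = μ.doNum h (π h) e := by
  simp only [doPolNum, doNum, doJoint, doPE]
  rw [Finset.sum_comm]
  refine Finset.sum_congr rfl fun s _ => ?_
  simp only [← mul_assoc, ← Finset.mul_sum]
  rw [μ.sum_doPE_eq_one π s _ (h ++ [(π h, e)]) (by simp; omega), mul_one]

end Env

theorem policy_causal_eq_action_causal_general
    {S A E : Type*} [Fintype S] [Fintype A] [Fintype E] {m : ℕ}
    (μ : Env S A E m) (π : List (A × E) → A) (h : List (A × E)) (e : E)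
    (hlen : h.length < m) :
    (∑ es : Fin (m - h.length - 1) → E,
        μ.doPolNum π h (e :: List.ofFn es) / μ.doPolDen π h)
        = μ.condDo h (π h) e ∧
    (∑ es : Fin (m - h.length - 1) → E,
        μ.doPolNum π h (e :: List.ofFn es) / μ.doPolDen π h)
        = ∑ s, μ.condS s h * μ.condESA s h (π h) e := by
  have hpolicy : (∑ es : Fin (m - h.length - 1) → E,
      μ.doPolNum π h (e :: List.ofFn es) / μ.doPolDen π h)
      = μ.doNum h (π h) e / μ.probH h := by
    rw [← Finset.sum_div, μ.sum_doPolNum_cons_eq_doNum π hlen, μ.doPolDen_eq_probH π hlen.le]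
  refine ⟨by rw [hpolicy, μ.condDo_eq_doNum_div_probH hlen], ?_⟩
  simp only [hpolicy, μ.condS_mul_condESA hlen, Env.doNum, Finset.sum_div]

/-- **Policy-causal equals action-causal** (Proposition 1):
for every deterministic policy `π`, history `æ_{<t}` of positive probability with `t ≤ m`,
and percept `e_t`, we have
`μ(e_t | æ_{<t}, do(π_{t:m})) = μ(e_t | æ_{<t}, do(a_t := π(æ_{<t})))`, that is,
`∑_{e_{t+1:m}} μ(e_{t:m} | æ_{<t}, do(a_t := π(æ_{<t}), …, a_m := π(æ_{<m})))
  = ∑_s μ(s | æ_{<t}) μ(e_t | s, æ_{<t}π(æ_{<t}))`. -/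
theorem policy_causal_eq_action_causal
    {S A E : Type*} [Fintype S] [Fintype A] [Fintype E] {m : ℕ}
    (μ : Env S A E m) (π : List (A × E) → A) (h : List (A × E)) (e : E)
    (hlen : h.length < m) (hpos : 0 < μ.probH h) :
    (∑ es : Fin (m - h.length - 1) → E,
        μ.doPolNum π h (e :: List.ofFn es) / μ.doPolDen π h)
        = μ.condDo h (π h) e ∧
    (∑ es : Fin (m - h.length - 1) → E,
        μ.doPolNum π h (e :: List.ofFn es) / μ.doPolDen π h)
        = ∑ s, μ.condS s h * μ.condESA s h (π h) e :=
  policy_causal_eq_action_causal_general μ π h e hlen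
end

section
/- Iterative form of the policy-evidential value: for every deterministic policy π and every history æ_{<t} with t ≤ m such that the event "history extends æ_{<t} and actions from t to m follow π" has positive μ-probability, V^{pev,π}_{μ,m}(æ_{<t}) = ∑_{k=t}^m ∑_{e_{t:k}} u(e_k) ∏_{i=t}^k μ(e_i | æ_{<i}, π_{i:m}), where a_i := π(æ_{<i}) for each i. -/
/-!
The recursion for `V^{pev,π}` conditions on `π_{t+1:m}` after the action `a_t` has been
fixed; at the action `a_t = π(æ_{<t})` the event "`a_t` taken, then `π` followed" is the
event "`π` followed from `t` on", so the recursion's one-step factor is exactly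
`μ(e_t | æ_{<t}, π_{t:m})`. Unrolling the recursion, and splitting each percept sequence
`e_{t:k}` into its head `e_t` and its tail, gives the iterated sum. Where the conditioning
event is null, both sides carry the factor `0 / 0 = 0`.
-/

section Events

variable {A E : Type*} {m : ℕ}

lemma extendsH_append_iff {h : List (A × E)} (hl : h.length < m) (a : A) (e : E)
    (τ : Fin m → A × E) :
    ExtendsH (h ++ [(a, e)]) τ ↔ ExtendsH h τ ∧ τ ⟨h.length, hl⟩ = (a, e) := by
  have hlen : h.length < (List.ofFn τ).length := by simpa using hl
  have htake : (List.ofFn τ).take (h.length + 1)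
      = (List.ofFn τ).take h.length ++ [τ ⟨h.length, hl⟩] := by
    rw [← List.take_concat_get hlen, List.concat_eq_append]
    simp [List.getElem_ofFn]
  simp only [ExtendsH, List.length_append, List.length_singleton, htake]
  simp [← List.concat_eq_append, List.concat_inj]

lemma followsFrom_iff_of_lt {t : ℕ} (ht : t < m) (π : List (A × E) → A)
    (τ : Fin m → A × E) :
    FollowsFrom π t τ ↔
      (τ ⟨t, ht⟩).1 = π ((List.ofFn τ).take t) ∧ FollowsFrom π (t + 1) τ := by
  constructor
  · intro hf
    exact ⟨hf ⟨t, ht⟩ le_rfl, fun i hi => hf i (by omega)⟩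
  · rintro ⟨hfirst, hrest⟩ i hi
    rcases hi.eq_or_lt with heq | hlt
    · obtain rfl : i = ⟨t, ht⟩ := Fin.ext heq.symm
      exact hfirst
    · exact hrest i hlt

lemma actAt_and_followsFrom_succ_iff {h : List (A × E)} (hl : h.length < m)
    (π : List (A × E) → A) (τ : Fin m → A × E) :
    (ExtendsH h τ ∧ ActAt h.length (π h) τ ∧ FollowsFrom π (h.length + 1) τ) ↔
      (ExtendsH h τ ∧ FollowsFrom π h.length τ) := by
  rw [followsFrom_iff_of_lt hl]
  refine and_congr_right fun hx => ?_
  rw [show (List.ofFn τ).take h.length = h from hx]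
  exact and_congr_left' ⟨fun ha => ha hl, fun ha _ => ha⟩

lemma extendsH_append_and_followsFrom_succ_iff {h : List (A × E)} (hl : h.length < m)
    (π : List (A × E) → A) (e : E) (τ : Fin m → A × E) :
    (ExtendsH (h ++ [(π h, e)]) τ ∧ FollowsFrom π (h.length + 1) τ) ↔
      (ExtendsH h τ ∧ FollowsFrom π h.length τ ∧ PerAt h.length e τ) := by
  rw [extendsH_append_iff hl, followsFrom_iff_of_lt hl]
  constructor
  · rintro ⟨⟨hx, hτ⟩, hf⟩
    refine ⟨hx, ⟨?_, hf⟩, fun _ => by rw [hτ]⟩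
    rw [hτ, show (List.ofFn τ).take h.length = h from hx]
  · rintro ⟨hx, ⟨hact, hf⟩, hper⟩
    rw [show (List.ofFn τ).take h.length = h from hx] at hact
    exact ⟨⟨hx, Prod.ext hact (hper hl)⟩, hf⟩

end Events

namespace Env

variable {S A E : Type*} [Fintype S] [Fintype A] [Fintype E] {m : ℕ}

lemma evP_congr (μ : Env S A E m) {Q Q' : (Fin m → A × E) → Prop}
    (hQ : ∀ τ, Q τ ↔ Q' τ) : μ.evP Q = μ.evP Q' := by
  obtain rfl : Q = Q' := funext fun τ => propext (hQ τ)
  rfl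

lemma condPevA_self_eq_condPev (μ : Env S A E m) (π : List (A × E) → A)
    {h : List (A × E)} (hl : h.length < m) (e : E) :
    μ.condPevA π h (π h) e = μ.condPev π h e := by
  rw [condPevA, condPev, evP_congr μ (extendsH_append_and_followsFrom_succ_iff hl π e),
    evP_congr μ (actAt_and_followsFrom_succ_iff hl π)]

lemma Vpev_succ (μ : Env S A E m) (u : E → ℝ) (π : List (A × E) → A) (n : ℕ)
    {h : List (A × E)} (hl : h.length < m) :
    μ.Vpev u π (n + 1) h =
      ∑ e, μ.condPev π h e * (u e + μ.Vpev u π n (h ++ [(π h, e)])) := by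
  simp only [Vpev, VpevA, condPevA_self_eq_condPev μ π hl]

lemma sum_fin_one_prodPev (μ : Env S A E m) (u : E → ℝ) (π : List (A × E) → A)
    (h : List (A × E)) :
    ∑ es : Fin 1 → E, u (es (Fin.last 0)) * μ.prodPev π h (List.ofFn es) =
      ∑ e, μ.condPev π h e * u e := by
  refine Fintype.sum_equiv (Equiv.funUnique (Fin 1) E) _ _ fun es => ?_
  simp [prodPev, List.ofFn_succ, mul_comm]

lemma sum_fin_succ_prodPev (μ : Env S A E m) (u : E → ℝ) (π : List (A × E) → A)
    (h : List (A × E)) (j : ℕ) :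
    ∑ es : Fin (j + 2) → E, u (es (Fin.last (j + 1))) * μ.prodPev π h (List.ofFn es) =
      ∑ e, μ.condPev π h e * ∑ es : Fin (j + 1) → E,
        u (es (Fin.last j)) * μ.prodPev π (h ++ [(π h, e)]) (List.ofFn es) := by
  rw [← (Fin.consEquiv fun _ : Fin (j + 2) => E).sum_comp, Fintype.sum_prod_type]
  refine Finset.sum_congr rfl fun e _ => ?_
  rw [Finset.mul_sum]
  refine Finset.sum_congr rfl fun es _ => ?_
  simp only [Fin.consEquiv, Equiv.coe_fn_mk, List.ofFn_succ, Fin.cons_zero, Fin.cons_succ,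
    ← Fin.succ_last, prodPev]
  ring

theorem Vpev_eq_sum_prodPev (μ : Env S A E m) (u : E → ℝ) (π : List (A × E) → A) :
    ∀ (n : ℕ) (h : List (A × E)), n ≤ m - h.length →
      μ.Vpev u π n h =
        ∑ j ∈ Finset.range n, ∑ es : Fin (j + 1) → E,
          u (es (Fin.last j)) * μ.prodPev π h (List.ofFn es)
  | 0, h, _ => by simp [Vpev, VpevA]
  | n + 1, h, hn => by
    have hl : h.length < m := by omega
    rw [Vpev_succ μ u π n hl, Finset.sum_range_succ', sum_fin_one_prodPev]
    simp only [sum_fin_succ_prodPev]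
    rw [Finset.sum_comm, ← Finset.sum_add_distrib]
    refine Finset.sum_congr rfl fun e _ => ?_
    rw [Vpev_eq_sum_prodPev μ u π n _ (by simp; omega), mul_add, Finset.mul_sum, add_comm]

end Env

theorem Vpev_iterative_form_general
    {S A E : Type*} [Fintype S] [Fintype A] [Fintype E] {m : ℕ}
    (μ : Env S A E m) (u : E → ℝ)
    (π : List (A × E) → A) (h : List (A × E)) :
    μ.Vpev u π (m - h.length) h =
      ∑ j ∈ Finset.range (m - h.length), ∑ es : Fin (j + 1) → E,
        u (es (Fin.last j)) * μ.prodPev π h (List.ofFn es) :=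
  μ.Vpev_eq_sum_prodPev u π _ h le_rfl

/-- **Iterative form of the policy-evidential value**: for every deterministic policy `π`
and history `æ_{<t}` with `t ≤ m` such that the event "the history extends `æ_{<t}` and
the actions from `t` to `m` follow `π`" has positive probability,
`V^{pev,π}_{μ,m}(æ_{<t}) = ∑_{k=t}^m ∑_{e_{t:k}} u(e_k) ∏_{i=t}^k μ(e_i | æ_{<i}, π_{i:m})`
where `a_i := π(æ_{<i})`. -/
theorem Vpev_iterative_form
    {S A E : Type*} [Fintype S] [Fintype A] [Fintype E] {m : ℕ}
    (μ : Env S A E m) (u : E → ℝ) (hu : ∀ e, 0 ≤ u e ∧ u e ≤ 1)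
    (π : List (A × E) → A) (h : List (A × E))
    (hlen : h.length < m)
    (hpos : 0 < μ.evP (fun τ => ExtendsH h τ ∧ FollowsFrom π h.length τ)) :
    μ.Vpev u π (m - h.length) h =
      ∑ j ∈ Finset.range (m - h.length), ∑ es : Fin (j + 1) → E,
        u (es (Fin.last j)) * μ.prodPev π h (List.ofFn es) :=
  Vpev_iterative_form_general μ u π h
end
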